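/- Let R be a Dedekind domain, B a Hopf algebra over R which is flat as an R-module, and A a normal Hopf subalgebra of B such that B is faithfully flat as a left A-module. Then the ideal BA⁺ is a saturated R-submodule of B (so C := B/BA⁺ is R-flat), and the R-linear map B ⊗_A B → C ⊗_R B sending b ⊗ b' to ∑ π(b₁) ⊗ b₂b' (where π : B → C is the quotient map) is a well-defined bijection. -/

import Mathlib

/-- Flatness of a left module over a possibly noncommutative ring, expressed by
Lazard's equational criterion: every linear relation `∑ aᵢ • bᵢ = 0` with
coefficients in the ring trivializes. This is equivalent to exactness of the
functor `(-) ⊗_A B` on right `A`-modules. -/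
def IsFlatMod (A B : Type*) [Ring A] [AddCommGroup B] [Module A B] : Prop :=
  ∀ (n : ℕ) (a : Fin n → A) (b : Fin n → B), (∑ i, a i • b i) = 0 →
    ∃ (m : ℕ) (c : Fin n → Fin m → A) (y : Fin m → B),
      (∀ i, b i = ∑ j, c i j • y j) ∧ ∀ j, (∑ i, a i * c i j) = 0

/-- Faithful flatness of a left module `B` over a possibly noncommutative ring `A`:
`B` is flat, and `I • B ≠ B` for every proper right ideal `I` of `A`. This is
equivalent to the functor `(-) ⊗_A B` on right `A`-modules being exact and killing
only the zero module. -/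
def IsFaithfullyFlatMod (A B : Type*) [Ring A] [AddCommGroup B] [Module A B] : Prop :=
  IsFlatMod A B ∧
    ∀ I : Submodule Aᵐᵒᵖ A, I ≠ ⊤ →
      AddSubgroup.closure {x : B | ∃ a ∈ I, ∃ y : B, x = a • y} ≠ ⊤

open TensorProduct

/-- The image of `M ⊗ N` in `B ⊗[R] B`, for submodules `M, N` of `B`. -/
noncomputable def tmulSub {R B : Type*} [CommRing R] [AddCommGroup B] [Module R B]
    (M N : Submodule R B) : Submodule R (B ⊗[R] B) :=
  LinearMap.range (TensorProduct.map M.subtype N.subtype)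

section HopfDefs

variable (R B : Type*) [CommRing R] [Ring B] [HopfAlgebra R B]

/-- The linear map `b ↦ ∑ b₁ a S(b₂)` (Sweedler notation). -/
noncomputable def lAd (a : B) : B →ₗ[R] B :=
  LinearMap.mul' R B ∘ₗ
    (TensorProduct.map LinearMap.id
      (LinearMap.mulLeft R a ∘ₗ (HopfAlgebra.antipode R : B →ₗ[R] B))) ∘ₗ
      (Coalgebra.comul : B →ₗ[R] B ⊗[R] B)

/-- The linear map `b ↦ ∑ S(b₁) a b₂` (Sweedler notation). -/
noncomputable def rAd (a : B) : B →ₗ[R] B :=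
  LinearMap.mul' R B ∘ₗ
    (TensorProduct.map
      (LinearMap.mulRight R a ∘ₗ (HopfAlgebra.antipode R : B →ₗ[R] B)) LinearMap.id) ∘ₗ
      (Coalgebra.comul : B →ₗ[R] B ⊗[R] B)

/-- An `R`-subalgebra `A` of the Hopf algebra `B` is a Hopf subalgebra if
`Δ(A) ⊆ A ⊗ A` and `S(A) ⊆ A`. -/
def IsHopfSubalgebra (A : Subalgebra R B) : Prop :=
  (∀ a ∈ A, (Coalgebra.comul : B →ₗ[R] B ⊗[R] B) a ∈
      tmulSub (Subalgebra.toSubmodule A) (Subalgebra.toSubmodule A)) ∧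
    ∀ a ∈ A, (HopfAlgebra.antipode R : B →ₗ[R] B) a ∈ A

/-- A subalgebra `A` of `B` is normal if `∑ b₁ a S(b₂) ∈ A` and `∑ S(b₁) a b₂ ∈ A`
for all `a ∈ A`, `b ∈ B`. -/
def IsNormalSubalgebra (A : Subalgebra R B) : Prop :=
  ∀ a ∈ A, ∀ b : B, lAd R B a b ∈ A ∧ rAd R B a b ∈ A

end HopfDefs

/-- A submodule `N ⊆ M` is saturated if `M/N` is `R`-torsion-free, i.e. if
`r • b ∈ N` for some non-zero `r : R` implies `b ∈ N`. -/
def IsSaturatedIn {R M : Type*} [CommRing R] [AddCommGroup M] [Module R M]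
    (N : Submodule R M) : Prop :=
  ∀ (r : R) (b : M), r ≠ 0 → r • b ∈ N → b ∈ N

section HopfAugIdeal

variable {R B : Type*} [CommRing R] [Ring B] [HopfAlgebra R B]

/-- The ideal `BA⁺` of `B` generated by the augmentation ideal
`A⁺ = A ∩ ker ε` of a subalgebra `A`, as an `R`-submodule of `B`. -/
noncomputable def hopfAugLeftSpan (A : Subalgebra R B) : Submodule R B :=
  Submodule.span R {x | ∃ (b : B) (a : B), a ∈ A ∧
    (Coalgebra.counit : B →ₗ[R] R) a = 0 ∧ x = b * a}

end HopfAugIdeal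

section FiberMap

variable {R B : Type*} [CommRing R] [Ring B] [HopfAlgebra R B]

/-- The submodule of `B ⊗[R] B` of relations defining `B ⊗[A] B`, i.e. the span of
the elements `(b a) ⊗ b' - b ⊗ (a b')` with `a ∈ A`; the quotient
`(B ⊗[R] B) / relSpan A` is `B ⊗[A] B`. -/
noncomputable def relSpan (A : Subalgebra R B) : Submodule R (B ⊗[R] B) :=
  Submodule.span R {x | ∃ (b b' : B) (a : B), a ∈ A ∧
    x = (b * a) ⊗ₜ[R] b' - b ⊗ₜ[R] (a * b')}

/-- The `R`-linear map `B ⊗[R] B → (B/BA⁺) ⊗[R] B` sending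
`b ⊗ b' ↦ ∑ π(b₁) ⊗ b₂ b'`, where `π : B → C := B/BA⁺` is the quotient map. -/
noncomputable def toFiberMap (A : Subalgebra R B) :
    B ⊗[R] B →ₗ[R] (B ⧸ hopfAugLeftSpan A) ⊗[R] B :=
  (TensorProduct.map (hopfAugLeftSpan A).mkQ (LinearMap.mul' R B)) ∘ₗ
    (TensorProduct.assoc R B B B).toLinearMap ∘ₗ
      (TensorProduct.map (Coalgebra.comul : B →ₗ[R] B ⊗[R] B) LinearMap.id)

end FiberMap

/-!
For a linear endomorphism `k` of `B`, the shear map `x ⊗ y ↦ ∑ x₁ ⊗ k(x₂) y` of `B ⊗ B` turns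
convolution products into composition, so the shear maps of `id` and of the antipode `S` are
mutually inverse. `toFiberMap` is the shear map of `id` followed by `π ⊗ id`, whose kernel is the
image of `BA⁺ ⊗ B` by right exactness of `⊗`. Using `Δ(A) ⊆ A ⊗ A`, the shear map of `id` sends
the relations of `B ⊗_A B` into that image, and the shear map of `S` sends the image back into the
relations; so the kernel of `toFiberMap` is exactly the module of relations.

Normality gives `BA⁺ = A⁺B`. If `r x = ∑ aₖ bₖ` with `aₖ ∈ A⁺`, the relation
`(-r) x + ∑ aₖ bₖ = 0` in the flat `A`-module `B` trivializes as `x = ∑ cⱼ yⱼ` with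
`-r cⱼ + ∑ aₖ cₖⱼ = 0` in `A`; applying `ε` gives `r ε(cⱼ) = 0`, so `cⱼ ∈ A⁺` and `x ∈ A⁺B`.
-/

open Coalgebra HopfAlgebra LinearMap WithConv

lemma sum_counit_right_smul {R C : Type*} [CommSemiring R] [AddCommMonoid C] [Module R C]
    [Coalgebra R C] {x : C} {ι : Type*} (𝓡 : Repr R x ι) :
    ∑ i ∈ 𝓡.index, counit (R := R) (𝓡.right i) • 𝓡.left i = x := by
  simpa only [map_sum, TensorProduct.rid_tmul, one_smul]
    using congr(TensorProduct.rid R C $(sum_tmul_counit_eq (R := R) 𝓡))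

lemma mul'_map_mem_span {R B : Type*} [CommSemiring R] [Semiring B] [Algebra R B] {s : Set B}
    {f g : B →ₗ[R] B} (h : ∀ u v, f u * g v ∈ s) (z : B ⊗[R] B) :
    mul' R B (TensorProduct.map f g z) ∈ Submodule.span R s := by
  induction z using TensorProduct.induction_on with
  | zero => simp
  | tmul u v => exact Submodule.subset_span (by simpa using h u v)
  | add z w hz hw => simpa using add_mem hz hw

section Shear

variable {R B : Type*} [CommSemiring R] [Semiring B] [Bialgebra R B]

noncomputable def shear (k : B →ₗ[R] B) : B ⊗[R] B →ₗ[R] B ⊗[R] B :=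
  TensorProduct.map LinearMap.id (mul' R B) ∘ₗ (TensorProduct.assoc R B B B).toLinearMap ∘ₗ
    rTensor B (lTensor B k ∘ₗ comul)

lemma shear_tmul (k : B →ₗ[R] B) {x : B} {ι : Type*} (𝓡 : Repr R x ι) (y : B) :
    shear k (x ⊗ₜ y) = ∑ i ∈ 𝓡.index, 𝓡.left i ⊗ₜ (k (𝓡.right i) * y) := by
  simp [shear, ← 𝓡.eq, TensorProduct.sum_tmul]

lemma shear_comp (k l : B →ₗ[R] B) :
    shear l ∘ₗ shear k = shear (toConv l * toConv k).ofConv := by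
  refine TensorProduct.ext' fun x y => ?_
  let 𝓡 := ℛ R x
  have coassoc := congr(lTensor B (mul' R B ∘ₗ TensorProduct.map l (mulRight R y ∘ₗ k))
    $(sum_tmul_tmul_eq 𝓡 (fun i => ℛ R (𝓡.left i)) (fun i => ℛ R (𝓡.right i))))
  simp only [map_sum, lTensor_tmul, comp_apply, TensorProduct.map_tmul, mul'_apply,
    mulRight_apply] at coassoc
  simp only [comp_apply, shear_tmul k 𝓡, map_sum, shear_tmul l (ℛ R (𝓡.left _)), shear_tmul _ 𝓡,
    (ℛ R (𝓡.right _)).convMul_apply, Finset.sum_mul, TensorProduct.tmul_sum, mul_assoc, coassoc]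

lemma shear_one : shear (1 : WithConv (B →ₗ[R] B)).ofConv = LinearMap.id := by
  refine TensorProduct.ext' fun x y => ?_
  simp only [shear_tmul _ (ℛ R x), LinearMap.convOne_apply, ← Algebra.smul_def,
    TensorProduct.tmul_smul, TensorProduct.smul_tmul', ← TensorProduct.sum_tmul,
    sum_counit_right_smul, LinearMap.id_apply]

end Shear

section HopfShear

variable {R B : Type*} [CommSemiring R] [Semiring B] [HopfAlgebra R B]

lemma shear_antipode_comp_shear_id :
    shear (antipode R) ∘ₗ shear (LinearMap.id : B →ₗ[R] B) = LinearMap.id := by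
  rw [shear_comp, LinearMap.antipode_mul_id, shear_one]

lemma shear_id_comp_shear_antipode :
    shear (LinearMap.id : B →ₗ[R] B) ∘ₗ shear (antipode R) = LinearMap.id := by
  rw [shear_comp, LinearMap.id_mul_antipode, shear_one]

end HopfShear

section AugmentationIdeal

variable {R B : Type*} [CommRing R] [Ring B]

noncomputable def hopfAugRightSpan [Bialgebra R B] (A : Subalgebra R B) : Submodule R B :=
  Submodule.span R {x | ∃ (a : B) (b : B), a ∈ A ∧
    (Coalgebra.counit : B →ₗ[R] R) a = 0 ∧ x = a * b}

section Bialgebra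

variable [Bialgebra R B] {A : Subalgebra R B}

lemma exists_sum_of_mem_hopfAugRightSpan {x : B} (hx : x ∈ hopfAugRightSpan A) :
    ∃ (n : ℕ) (a : Fin n → A) (b : Fin n → B),
      (∀ k, counit (R := R) (a k : B) = 0) ∧ x = ∑ k, (a k : B) * b k := by
  obtain ⟨n, f, g, rfl⟩ := Submodule.mem_span_set'.1 hx
  choose a b ha h0 hg using fun k => (g k).2
  refine ⟨n, fun k => ⟨a k, ha k⟩, fun k => f k • b k, h0, Finset.sum_congr rfl fun k _ => ?_⟩
  rw [hg, mul_smul_comm]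

lemma isSaturatedIn_hopfAugRightSpan [NoZeroDivisors R] (hflat : IsFlatMod A B) :
    IsSaturatedIn (hopfAugRightSpan A) := by
  intro r x hr hrx
  obtain ⟨n, a, b, h0, hsum⟩ := exists_sum_of_mem_hopfAugRightSpan hrx
  obtain ⟨m, c, y, hβ, hα⟩ := hflat (n + 1) (Fin.cons (-algebraMap R A r) a) (Fin.cons x b) (by
    simp [Fin.sum_univ_succ, Subalgebra.smul_def, ← Algebra.smul_def, hsum])
  have hc0 : ∀ j, counit (R := R) (c 0 j : B) = 0 := fun j => by
    simpa [Fin.sum_univ_succ, h0, hr] using congr(counit (R := R) ($(hα j) : B))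
  rw [show x = _ from hβ 0]
  exact Submodule.sum_mem _ fun j _ => Submodule.subset_span ⟨c 0 j, y j, (c 0 j).2, hc0 j, rfl⟩

end Bialgebra

variable [HopfAlgebra R B]

lemma toConv_lAd (a : B) :
    toConv (lAd R B a) = toConv (mulRight R a) * toConv (antipode R) := by
  ext x
  simp [lAd, (ℛ R x).convMul_apply, ← (ℛ R x).eq, mul_assoc]

lemma toConv_rAd (a : B) :
    toConv (rAd R B a) = toConv (antipode R) * toConv (mulLeft R a) := by
  ext x
  simp [rAd, (ℛ R x).convMul_apply, ← (ℛ R x).eq, mul_assoc]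

lemma counit_lAd {a : B} (h0 : counit (R := R) a = 0) (x : B) :
    counit (R := R) (lAd R B a x) = 0 := by
  simp [lAd, ← (ℛ R x).eq, h0]

lemma counit_rAd {a : B} (h0 : counit (R := R) a = 0) (x : B) :
    counit (R := R) (rAd R B a x) = 0 := by
  simp [rAd, ← (ℛ R x).eq, h0]

lemma mul_eq_mul'_map_lAd (a b : B) :
    b * a = mul' R B (TensorProduct.map (lAd R B a) LinearMap.id (comul b)) := by
  have h : toConv (lAd R B a) * toConv LinearMap.id = toConv (mulRight R a) := by
    rw [toConv_lAd, mul_assoc, LinearMap.antipode_mul_id, mul_one]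
  exact (LinearMap.congr_fun congr(ofConv $h) b).symm

lemma mul_eq_mul'_map_rAd (a b : B) :
    a * b = mul' R B (TensorProduct.map LinearMap.id (rAd R B a) (comul b)) := by
  have h : toConv LinearMap.id * toConv (rAd R B a) = toConv (mulLeft R a) := by
    rw [toConv_rAd, ← mul_assoc, LinearMap.id_mul_antipode, one_mul]
  exact (LinearMap.congr_fun congr(ofConv $h) b).symm

lemma hopfAugLeftSpan_eq_hopfAugRightSpan {A : Subalgebra R B}
    (hnormal : IsNormalSubalgebra R B A) : hopfAugLeftSpan A = hopfAugRightSpan A := by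
  refine le_antisymm (Submodule.span_le.2 ?_) (Submodule.span_le.2 ?_)
  · rintro _ ⟨b, a, ha, h0, rfl⟩
    rw [mul_eq_mul'_map_lAd (R := R) a b]
    refine mul'_map_mem_span (fun u v => ?_) _
    exact ⟨_, v, (hnormal a ha u).1, counit_lAd h0 u, rfl⟩
  · rintro _ ⟨a, b, ha, h0, rfl⟩
    rw [mul_eq_mul'_map_rAd (R := R) a b]
    refine mul'_map_mem_span (fun u v => ?_) _
    exact ⟨u, _, (hnormal a ha v).2, counit_rAd h0 v, rfl⟩

end AugmentationIdeal

section FiberMapKernel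

variable {R B : Type*} [CommRing R] [Ring B] [HopfAlgebra R B] {A : Subalgebra R B}

lemma IsHopfSubalgebra.exists_repr (hA : IsHopfSubalgebra R B A) {a : B} (ha : a ∈ A) :
    ∃ 𝓡 : Repr R a (A × A), ∀ i, 𝓡.left i ∈ A ∧ 𝓡.right i ∈ A := by
  obtain ⟨t, ht⟩ := hA.1 a ha
  obtain ⟨S, rfl⟩ := TensorProduct.exists_finset (R := R) t
  simp only [map_sum, TensorProduct.map_tmul, Submodule.coe_subtype] at ht
  exact ⟨⟨S, fun p => p.1, fun p => p.2, ht⟩, fun p => ⟨p.1.2, p.2.2⟩⟩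

lemma toFiberMap_eq_rTensor_mkQ_comp_shear (A : Subalgebra R B) :
    toFiberMap A = rTensor B (hopfAugLeftSpan A).mkQ ∘ₗ shear LinearMap.id := by
  refine TensorProduct.ext' fun x y => ?_
  simp [toFiberMap, shear_tmul _ (ℛ R x), ← (ℛ R x).eq, TensorProduct.sum_tmul]

lemma hopfAugLeftSpan_mkQ_mul_of_mem (u : B) {a : B} (ha : a ∈ A) :
    (hopfAugLeftSpan A).mkQ (u * a) = counit (R := R) a • (hopfAugLeftSpan A).mkQ u := by
  rw [← map_smul, Submodule.mkQ_apply, Submodule.mkQ_apply, Submodule.Quotient.eq,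
    Algebra.smul_def, Algebra.commutes, ← mul_sub]
  refine Submodule.subset_span ⟨u, _, sub_mem ha (A.algebraMap_mem _), ?_, rfl⟩
  simp

lemma toFiberMap_mul_tmul (hA : IsHopfSubalgebra R B A) (b : B) {a : B} (ha : a ∈ A) (y : B) :
    toFiberMap A ((b * a) ⊗ₜ y) = toFiberMap A (b ⊗ₜ (a * y)) := by
  obtain ⟨𝓐, h𝓐⟩ := hA.exists_repr ha
  simp only [toFiberMap_eq_rTensor_mkQ_comp_shear, comp_apply, shear_tmul _ ((ℛ R b).mul 𝓐),
    shear_tmul _ (ℛ R b), map_sum, rTensor_tmul, Coalgebra.Repr.mul_left,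
    Coalgebra.Repr.mul_right, Coalgebra.Repr.mul_index, Finset.sum_product,
    hopfAugLeftSpan_mkQ_mul_of_mem _ (h𝓐 _).1]
  refine Finset.sum_congr rfl fun i _ => ?_
  simp only [LinearMap.id_apply, TensorProduct.smul_tmul, ← TensorProduct.tmul_sum]
  conv_rhs => rw [← sum_counit_smul 𝓐]
  simp only [Finset.sum_mul, Finset.mul_sum, smul_mul_assoc, mul_smul_comm, mul_assoc]

lemma relSpan_mk_mul_tmul (b : B) {a : B} (ha : a ∈ A) (y : B) :
    (Submodule.Quotient.mk ((b * a) ⊗ₜ[R] y) : _ ⧸ relSpan A) =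
      Submodule.Quotient.mk (b ⊗ₜ (a * y)) :=
  (Submodule.Quotient.eq _).2 (Submodule.subset_span ⟨b, y, a, ha, rfl⟩)

lemma shear_antipode_mul_tmul_mem_relSpan (hA : IsHopfSubalgebra R B A) (b : B) {a : B}
    (ha : a ∈ A) (h0 : counit (R := R) a = 0) (y : B) :
    shear (antipode R) ((b * a) ⊗ₜ y) ∈ relSpan A := by
  obtain ⟨𝓐, h𝓐⟩ := hA.exists_repr ha
  have hsum : ∀ c, ∑ p ∈ 𝓐.index, 𝓐.left p * (antipode R (𝓐.right p) * c) = 0 := fun c => by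
    simp only [← mul_assoc, ← Finset.sum_mul, sum_mul_antipode_eq_algebraMap_counit, h0, map_zero,
      zero_mul]
  rw [← Submodule.Quotient.mk_eq_zero, shear_tmul _ ((ℛ R b).mul 𝓐), ← Submodule.mkQ_apply]
  simp only [Coalgebra.Repr.mul_left, Coalgebra.Repr.mul_right, Coalgebra.Repr.mul_index,
    Finset.sum_product, antipode_mul_antidistrib, mul_assoc, map_sum, Submodule.mkQ_apply,
    relSpan_mk_mul_tmul _ (h𝓐 _).1]
  simp only [← Submodule.mkQ_apply, ← map_sum, ← TensorProduct.tmul_sum, hsum,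
    TensorProduct.tmul_zero, Finset.sum_const_zero, map_zero]

lemma shear_antipode_mem_relSpan (hA : IsHopfSubalgebra R B A) {z : B ⊗[R] B}
    (hz : z ∈ range (rTensor B (hopfAugLeftSpan A).subtype)) :
    shear (antipode R) z ∈ relSpan A := by
  rw [rTensor, TensorProduct.range_map, Submodule.range_subtype] at hz
  suffices Submodule.map₂ (TensorProduct.mk R B B) (hopfAugLeftSpan A) (range LinearMap.id) ≤
      (relSpan A).comap (shear (antipode R)) from this hz
  refine Submodule.map₂_le.2 fun m hm y _ => ?_
  suffices hopfAugLeftSpan A ≤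
      ((relSpan A).comap (shear (antipode R))).comap ((TensorProduct.mk R B B).flip y) from this hm
  refine Submodule.span_le.2 ?_
  rintro _ ⟨b, a, ha, h0, rfl⟩
  exact shear_antipode_mul_tmul_mem_relSpan hA b ha h0 y

lemma ker_toFiberMap (hA : IsHopfSubalgebra R B A) : ker (toFiberMap A) = relSpan A := by
  refine le_antisymm (fun x hx => ?_) (Submodule.span_le.2 ?_)
  · rw [LinearMap.mem_ker, toFiberMap_eq_rTensor_mkQ_comp_shear, comp_apply, ← LinearMap.mem_ker,
      rTensor_mkQ] at hx
    simpa [← comp_apply, shear_antipode_comp_shear_id] using shear_antipode_mem_relSpan hA hx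
  · rintro _ ⟨b, y, a, ha, rfl⟩
    simp [toFiberMap_mul_tmul hA b ha y]

lemma toFiberMap_surjective (A : Subalgebra R B) : Function.Surjective (toFiberMap A) := by
  rw [toFiberMap_eq_rTensor_mkQ_comp_shear, coe_comp]
  exact (rTensor_surjective B (Submodule.mkQ_surjective _)).comp fun z =>
    ⟨shear (antipode R) z, LinearMap.congr_fun shear_id_comp_shear_antipode z⟩

end FiberMapKernel

theorem galois_map_bijective_general
    (R B : Type*) [CommRing R] [IsDomain R]
    [Ring B] [HopfAlgebra R B]
    (A : Subalgebra R B) (hA : IsHopfSubalgebra R B A)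
    (hnormal : IsNormalSubalgebra R B A)
    (hff : IsFaithfullyFlatMod ↥A B) :
    IsSaturatedIn (hopfAugLeftSpan A) ∧
    ∃ h : relSpan A ≤ LinearMap.ker (toFiberMap A),
      Function.Bijective ((relSpan A).liftQ (toFiberMap A) h) := by
  refine ⟨hopfAugLeftSpan_eq_hopfAugRightSpan hnormal ▸ isSaturatedIn_hopfAugRightSpan hff.1,
    (ker_toFiberMap hA).ge, ?_, ?_⟩
  · rw [← LinearMap.ker_eq_bot]
    exact Submodule.ker_liftQ_eq_bot' _ _ (ker_toFiberMap hA).symm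
  · rw [← LinearMap.range_eq_top, Submodule.range_liftQ, LinearMap.range_eq_top]
    exact toFiberMap_surjective A

/-- **Proposition.** Let `R` be a Dedekind domain, `B` an `R`-flat Hopf algebra and
`A` a normal Hopf subalgebra of `B` such that `B` is faithfully flat as a left
`A`-module. Then the ideal `BA⁺` is a saturated `R`-submodule of `B` (so
`C := B/BA⁺` is `R`-flat), and the map `B ⊗[A] B → C ⊗[R] B`,
`b ⊗ b' ↦ ∑ π(b₁) ⊗ b₂ b'`, is a well-defined bijection. -/
theorem galois_map_bijective
    (R B : Type*) [CommRing R] [IsDomain R] [IsDedekindDomain R]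
    [Ring B] [HopfAlgebra R B] [Module.Flat R B]
    (A : Subalgebra R B) (hA : IsHopfSubalgebra R B A)
    (hnormal : IsNormalSubalgebra R B A)
    (hff : IsFaithfullyFlatMod ↥A B) :
    IsSaturatedIn (hopfAugLeftSpan A) ∧
    ∃ h : relSpan A ≤ LinearMap.ker (toFiberMap A),
      Function.Bijective ((relSpan A).liftQ (toFiberMap A) h) :=
  galois_map_bijective_general R B A hA hnormal hff
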